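/- There exists C such that for all x, y ∈ R^2 with |x| ≤ |y| and |x-y| ≥ |y|/2, Σ_{n ∈ Z^2} 1/((1+|x-n|)(1+|y-n|)(1+|n|)^2) ≤ C ln(e + |x-y|)/((1+|x|)(1+|y|)). -/

import Mathlib

open MeasureTheory Real Filter

noncomputable section

abbrev E2 := EuclideanSpace ℝ (Fin 2)

/-- The Biot–Savart kernel `K(z) = z^⊥ / (2π |z|^2)`. -/
def K (z : E2) : E2 := (1 / (2 * Real.pi * ‖z‖ ^ 2)) • (!₂[-(z 1), z 0] : E2)

/-- The unit square `Q_0 = [0,1)^2`. -/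
def Q0 : Set E2 := {y | y 0 ∈ Set.Ico (0 : ℝ) 1 ∧ y 1 ∈ Set.Ico (0 : ℝ) 1}

/-- The concentric triple `3Q_0` of the unit square (side 3, same center). -/
def threeQ0 : Set E2 := {y | y 0 ∈ Set.Icc (-1 : ℝ) 2 ∧ y 1 ∈ Set.Icc (-1 : ℝ) 2}

/-- The velocity field of the unit-square vortex patch. -/
def v (x : E2) : E2 := ∫ y in Q0, K (x - y)

/-- Embedding of the lattice `ℤ²` into the plane. -/
def latt (n : ℤ × ℤ) : E2 := (!₂[(n.1 : ℝ), (n.2 : ℝ)] : E2)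

/-- `ln⁻ t = -min{0, ln t} = max{0, -ln t}`. -/
def lnNeg (t : ℝ) : ℝ := max 0 (-Real.log t)

end

/-!
Split the lattice into the points within `‖x‖ / 4` of `x`, those within `‖y‖ / 4` of `y`, those
with `‖n‖ ≥ 2‖y‖`, and the rest. Since `‖x‖ ≤ ‖y‖ ≤ 2‖x - y‖`, on each region all factors of the
summand but one are bounded below by multiples of `1 + ‖x‖`, `1 + ‖y‖` or `1 + ‖n‖`, and the
remaining factor is summed by counting lattice points: if `m` is the lattice point nearest to `c`,
the square shell `max |n₁ - m₁| |n₂ - m₂| = k` contains at most `8k + 1` points, on all of which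
`‖c - n‖` lies between `k - 1` and `2k + 1`. This bounds `∑ (1 + ‖c - n‖)⁻¹` over a disc of
radius `R` by `O(1 + R)`, the sum of the squares by `O(log (e + R))` and the tail `‖c - n‖ ≥ R` of
the fourth powers by `O((1 + R)⁻²)`; only the last region, where `R = 2‖y‖ ≤ 4‖x - y‖`, produces
the logarithm.
-/

open Finset

def boxIndex (p : ℤ × ℤ) : ℕ := max p.1.natAbs p.2.natAbs

noncomputable def latticeRound (c : E2) : ℤ × ℤ := (round (c 0), round (c 1))

lemma card_box_le (k : ℕ) : #(box k : Finset (ℤ × ℤ)) ≤ 8 * k + 1 := by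
  rcases eq_or_ne k 0 with rfl | hk
  · simp
  · rw [Int.card_box hk]; omega

lemma sum_le_sum_image_boxIndex (F : Finset (ℤ × ℤ)) (m : ℤ × ℤ) {f : ℤ × ℤ → ℝ} {g : ℕ → ℝ}
    (hg : ∀ k, 0 ≤ g k) (hfg : ∀ n ∈ F, f n ≤ g (boxIndex (n - m))) :
    ∑ n ∈ F, f n ≤ ∑ k ∈ F.image (fun n ↦ boxIndex (n - m)), (8 * (k : ℝ) + 1) * g k := by
  calc ∑ n ∈ F, f n ≤ ∑ n ∈ F, g (boxIndex (n - m)) := sum_le_sum hfg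
    _ = ∑ k ∈ F.image (fun n ↦ boxIndex (n - m)), #{n ∈ F | boxIndex (n - m) = k} • g k :=
      sum_comp g _
    _ ≤ _ := by
      gcongr with k
      rw [nsmul_eq_mul]
      gcongr
      · exact hg k
      · have hcard : #{n ∈ F | boxIndex (n - m) = k} ≤ #(box k : Finset (ℤ × ℤ)) :=
          card_le_card_of_injOn (· - m) (fun n hn ↦ Int.mem_box.2 (mem_filter.1 hn).2)
            sub_left_injective.injOn
        exact_mod_cast hcard.trans (card_box_le k)

@[simp] lemma latt_apply_zero (n : ℤ × ℤ) : latt n 0 = n.1 := by simp [latt]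

@[simp] lemma latt_apply_one (n : ℤ × ℤ) : latt n 1 = n.2 := by simp [latt]

lemma latt_sub (n m : ℤ × ℤ) : latt (n - m) = latt n - latt m := by
  ext i; fin_cases i <;> simp

lemma E2.norm_eq_sqrt (v : E2) : ‖v‖ = √(v 0 ^ 2 + v 1 ^ 2) := by
  simp [EuclideanSpace.norm_eq, Fin.sum_univ_two]

lemma E2.norm_le_abs_add_abs (v : E2) : ‖v‖ ≤ |v 0| + |v 1| := by
  rw [E2.norm_eq_sqrt, Real.sqrt_le_left (by positivity)]
  nlinarith [sq_abs (v 0), sq_abs (v 1), abs_nonneg (v 0), abs_nonneg (v 1)]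

lemma boxIndex_le_norm_latt (p : ℤ × ℤ) : (boxIndex p : ℝ) ≤ ‖latt p‖ := by
  have h0 := PiLp.norm_apply_le (latt p) 0
  have h1 := PiLp.norm_apply_le (latt p) 1
  simp only [latt_apply_zero, latt_apply_one, Real.norm_eq_abs] at h0 h1
  simp only [boxIndex, Nat.cast_max, Nat.cast_natAbs, Int.cast_abs]
  exact max_le h0 h1

lemma norm_latt_le_two_mul_boxIndex (p : ℤ × ℤ) : ‖latt p‖ ≤ 2 * boxIndex p := by
  have h := E2.norm_le_abs_add_abs (latt p)
  simp only [latt_apply_zero, latt_apply_one] at h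
  simp only [boxIndex, Nat.cast_max, Nat.cast_natAbs, Int.cast_abs]
  linarith [le_max_left |(p.1 : ℝ)| |(p.2 : ℝ)|, le_max_right |(p.1 : ℝ)| |(p.2 : ℝ)|]

lemma norm_sub_latt_latticeRound_le (c : E2) : ‖c - latt (latticeRound c)‖ ≤ 1 := by
  have h0 := abs_sub_round (c 0)
  have h1 := abs_sub_round (c 1)
  rw [E2.norm_eq_sqrt, Real.sqrt_le_one]
  simp only [PiLp.sub_apply, latt_apply_zero, latt_apply_one, latticeRound]
  nlinarith [sq_abs (c 0 - round (c 0)), sq_abs (c 1 - round (c 1)),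
    abs_nonneg (c 0 - round (c 0)), abs_nonneg (c 1 - round (c 1))]

lemma boxIndex_sub_latticeRound_le (c : E2) (n : ℤ × ℤ) :
    (boxIndex (n - latticeRound c) : ℝ) ≤ ‖c - latt n‖ + 1 := by
  calc (boxIndex (n - latticeRound c) : ℝ) ≤ ‖latt n - latt (latticeRound c)‖ := by
        rw [← latt_sub]; exact boxIndex_le_norm_latt _
    _ ≤ ‖latt n - c‖ + ‖c - latt (latticeRound c)‖ := norm_sub_le_norm_sub_add_norm_sub _ _ _
    _ ≤ ‖c - latt n‖ + 1 := by
        rw [norm_sub_rev (latt n) c]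
        linarith [norm_sub_latt_latticeRound_le c]

lemma norm_sub_latt_le_boxIndex (c : E2) (n : ℤ × ℤ) :
    ‖c - latt n‖ ≤ 2 * boxIndex (n - latticeRound c) + 1 := by
  calc ‖c - latt n‖ ≤ ‖c - latt (latticeRound c)‖ + ‖latt (latticeRound c) - latt n‖ :=
        norm_sub_le_norm_sub_add_norm_sub _ _ _
    _ ≤ 1 + 2 * boxIndex (n - latticeRound c) := by
        rw [norm_sub_rev (latt _), ← latt_sub]
        linarith [norm_sub_latt_latticeRound_le c,
          norm_latt_le_two_mul_boxIndex (n - latticeRound c)]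
    _ = _ := add_comm _ _

lemma boxIndex_add_one_div_two_le (c : E2) (n : ℤ × ℤ) :
    ((boxIndex (n - latticeRound c) : ℝ) + 1) / 2 ≤ 1 + ‖c - latt n‖ := by
  linarith [boxIndex_sub_latticeRound_le c n, norm_nonneg (c - latt n)]

lemma sum_one_div_succ_le_one_add_log (K : ℕ) :
    ∑ k ∈ range K, 1 / ((k : ℝ) + 1) ≤ 1 + log K := by
  have h := harmonic_le_one_add_log K
  simpa [harmonic, one_div] using h

lemma sum_one_div_succ_pow_three_le (a : ℕ) (T : Finset ℕ) (hT : ∀ k ∈ T, a ≤ k) :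
    ∑ k ∈ T, 1 / ((k : ℝ) + 1) ^ 3 ≤ 2 / ((a : ℝ) + 1) ^ 2 := by
  have hsq : ∑ k ∈ T, 1 / ((k : ℝ) + 1) ^ 2 ≤ 2 / ((a : ℝ) + 1) := by
    calc ∑ k ∈ T, 1 / ((k : ℝ) + 1) ^ 2
        = ∑ i ∈ T.map (addRightEmbedding 1), ((i : ℝ) ^ 2)⁻¹ := by simp [one_div]
      _ ≤ ∑ i ∈ Ioo a (T.sup id + 2), ((i : ℝ) ^ 2)⁻¹ := by
          refine sum_le_sum_of_subset_of_nonneg ?_ fun _ _ _ ↦ by positivity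
          intro i hi
          obtain ⟨k, hk, rfl⟩ := mem_map.1 hi
          have := le_sup (f := id) hk
          simp only [addRightEmbedding_apply, mem_Ioo, id] at this ⊢
          exact ⟨by linarith [hT k hk], by omega⟩
      _ ≤ 2 / ((a : ℝ) + 1) := sum_Ioo_inv_sq_le _ _
  calc ∑ k ∈ T, 1 / ((k : ℝ) + 1) ^ 3
      ≤ ∑ k ∈ T, 1 / ((a : ℝ) + 1) * (1 / ((k : ℝ) + 1) ^ 2) := by
        gcongr with k hk
        rw [div_mul_div_comm, one_mul, pow_succ, mul_comm]
        gcongr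
        exact_mod_cast hT k hk
    _ = 1 / ((a : ℝ) + 1) * ∑ k ∈ T, 1 / ((k : ℝ) + 1) ^ 2 := by rw [mul_sum]
    _ ≤ 1 / ((a : ℝ) + 1) * (2 / ((a : ℝ) + 1)) := by gcongr
    _ = 2 / ((a : ℝ) + 1) ^ 2 := by rw [div_mul_div_comm, one_mul, sq]

lemma one_le_log_exp_one_add {R : ℝ} (hR : 0 ≤ R) : 1 ≤ log (exp 1 + R) := by
  rw [le_log_iff_exp_le (by positivity)]
  linarith

section LatticeSums

variable (c : E2) {R : ℝ} {F : Finset (ℤ × ℤ)}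

lemma image_boxIndex_subset_range (hF : ∀ n ∈ F, ‖c - latt n‖ ≤ R) :
    F.image (fun n ↦ boxIndex (n - latticeRound c)) ⊆ range (⌊R⌋₊ + 2) := by
  intro k hk
  obtain ⟨n, hn, rfl⟩ := mem_image.1 hk
  rw [mem_range, ← Nat.cast_lt (α := ℝ)]
  push_cast
  linarith [boxIndex_sub_latticeRound_le c n, hF n hn, Nat.lt_floor_add_one R]

lemma sum_one_div_one_add_norm_sub_latt_le (hR : 0 ≤ R) (hF : ∀ n ∈ F, ‖c - latt n‖ ≤ R) :
    ∑ n ∈ F, 1 / (1 + ‖c - latt n‖) ≤ 16 * (R + 2) := by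
  calc ∑ n ∈ F, 1 / (1 + ‖c - latt n‖)
      ≤ ∑ k ∈ F.image (fun n ↦ boxIndex (n - latticeRound c)),
          (8 * (k : ℝ) + 1) * (2 / ((k : ℝ) + 1)) := by
        refine sum_le_sum_image_boxIndex F _ (fun k ↦ by positivity) fun n _ ↦ ?_
        rw [div_le_div_iff₀ (by positivity) (by positivity)]
        linarith [boxIndex_add_one_div_two_le c n]
    _ ≤ ∑ _k ∈ F.image (fun n ↦ boxIndex (n - latticeRound c)), (16 : ℝ) := by
        refine sum_le_sum fun k _ ↦ ?_
        rw [mul_div_assoc', div_le_iff₀ (by positivity)]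
        linarith
    _ ≤ ∑ _k ∈ range (⌊R⌋₊ + 2), (16 : ℝ) :=
        sum_le_sum_of_subset_of_nonneg (image_boxIndex_subset_range c hF) fun _ _ _ ↦ by norm_num
    _ ≤ 16 * (R + 2) := by
        simp only [sum_const, card_range, nsmul_eq_mul]
        push_cast
        linarith [Nat.floor_le hR]

lemma sum_one_div_one_add_norm_sub_latt_sq_le (hR : 0 ≤ R) (hF : ∀ n ∈ F, ‖c - latt n‖ ≤ R) :
    ∑ n ∈ F, 1 / (1 + ‖c - latt n‖) ^ 2 ≤ 64 * log (exp 1 + R) := by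
  set K := ⌊R⌋₊ + 2
  have hK : (K : ℝ) ≤ exp 1 + R := by
    simp only [K]; push_cast; linarith [Nat.floor_le hR, add_one_le_exp (1 : ℝ)]
  calc ∑ n ∈ F, 1 / (1 + ‖c - latt n‖) ^ 2
      ≤ ∑ k ∈ F.image (fun n ↦ boxIndex (n - latticeRound c)),
          (8 * (k : ℝ) + 1) * (4 / ((k : ℝ) + 1) ^ 2) := by
        refine sum_le_sum_image_boxIndex F _ (fun k ↦ by positivity) fun n _ ↦ ?_
        calc 1 / (1 + ‖c - latt n‖) ^ 2
            ≤ 1 / (((boxIndex (n - latticeRound c) : ℝ) + 1) / 2) ^ 2 := by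
              gcongr; exact boxIndex_add_one_div_two_le c n
          _ = 4 / ((boxIndex (n - latticeRound c) : ℝ) + 1) ^ 2 := by
              field_simp; norm_num
    _ ≤ ∑ k ∈ F.image (fun n ↦ boxIndex (n - latticeRound c)), 32 * (1 / ((k : ℝ) + 1)) := by
        refine sum_le_sum fun k _ ↦ ?_
        calc (8 * (k : ℝ) + 1) * (4 / ((k : ℝ) + 1) ^ 2)
            ≤ 8 * ((k : ℝ) + 1) * (4 / ((k : ℝ) + 1) ^ 2) := by gcongr; linarith
          _ = 32 * (1 / ((k : ℝ) + 1)) := by field_simp; norm_num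
    _ ≤ ∑ k ∈ range K, 32 * (1 / ((k : ℝ) + 1)) :=
        sum_le_sum_of_subset_of_nonneg (image_boxIndex_subset_range c hF)
          fun _ _ _ ↦ by positivity
    _ ≤ 32 * (1 + log K) := by
        rw [← mul_sum]; gcongr; exact sum_one_div_succ_le_one_add_log K
    _ ≤ 32 * (1 + log (exp 1 + R)) := by gcongr
    _ ≤ 64 * log (exp 1 + R) := by linarith [one_le_log_exp_one_add hR]

lemma sum_one_div_one_add_norm_sub_latt_pow_four_le (hR : 0 ≤ R)
    (hF : ∀ n ∈ F, R ≤ ‖c - latt n‖) :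
    ∑ n ∈ F, 1 / (1 + ‖c - latt n‖) ^ 4 ≤ 1024 / (1 + R) ^ 2 := by
  set a := ⌈(R - 1) / 2⌉₊
  have ha : ∀ k ∈ F.image (fun n ↦ boxIndex (n - latticeRound c)), a ≤ k := by
    intro k hk
    obtain ⟨n, hn, rfl⟩ := mem_image.1 hk
    rw [Nat.ceil_le]
    linarith [norm_sub_latt_le_boxIndex c n, hF n hn]
  have ha' : (1 + R) / 2 ≤ (a : ℝ) + 1 := by linarith [Nat.le_ceil ((R - 1) / 2)]
  calc ∑ n ∈ F, 1 / (1 + ‖c - latt n‖) ^ 4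
      ≤ ∑ k ∈ F.image (fun n ↦ boxIndex (n - latticeRound c)),
          (8 * (k : ℝ) + 1) * (16 / ((k : ℝ) + 1) ^ 4) := by
        refine sum_le_sum_image_boxIndex F _ (fun k ↦ by positivity) fun n _ ↦ ?_
        calc 1 / (1 + ‖c - latt n‖) ^ 4
            ≤ 1 / (((boxIndex (n - latticeRound c) : ℝ) + 1) / 2) ^ 4 := by
              gcongr; exact boxIndex_add_one_div_two_le c n
          _ = 16 / ((boxIndex (n - latticeRound c) : ℝ) + 1) ^ 4 := by
              field_simp; norm_num
    _ ≤ ∑ k ∈ F.image (fun n ↦ boxIndex (n - latticeRound c)),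
          128 * (1 / ((k : ℝ) + 1) ^ 3) := by
        refine sum_le_sum fun k _ ↦ ?_
        calc (8 * (k : ℝ) + 1) * (16 / ((k : ℝ) + 1) ^ 4)
            ≤ 8 * ((k : ℝ) + 1) * (16 / ((k : ℝ) + 1) ^ 4) := by gcongr; linarith
          _ = 128 * (1 / ((k : ℝ) + 1) ^ 3) := by field_simp; norm_num
    _ ≤ 128 * (2 / ((a : ℝ) + 1) ^ 2) := by
        rw [← mul_sum]; gcongr; exact sum_one_div_succ_pow_three_le a _ ha
    _ ≤ 128 * (2 / ((1 + R) / 2) ^ 2) := by gcongr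
    _ = 1024 / (1 + R) ^ 2 := by field_simp; norm_num

end LatticeSums

lemma log_exp_one_add_le_two_mul_log {R d : ℝ} (hR : 0 ≤ R) (hRd : R ≤ 4 * d) :
    log (exp 1 + R) ≤ 2 * log (exp 1 + d) := by
  have he : 2 ≤ exp 1 := by linarith [add_one_le_exp (1 : ℝ)]
  calc log (exp 1 + R) ≤ log ((exp 1 + d) ^ 2) := log_le_log (by positivity) (by nlinarith)
    _ = 2 * log (exp 1 + d) := by rw [log_pow]; norm_num

noncomputable def covSummand (x y : E2) (n : ℤ × ℤ) : ℝ :=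
  1 / ((1 + ‖x - latt n‖) * (1 + ‖y - latt n‖) * (1 + ‖latt n‖) ^ 2)

lemma covSummand_comm (x y : E2) (n : ℤ × ℤ) : covSummand x y n = covSummand y x n := by
  simp only [covSummand, mul_comm (1 + ‖x - latt n‖)]

section Regions

variable {x y : E2} {F : Finset (ℤ × ℤ)}

lemma sum_covSummand_near_le (hxy : ‖x‖ / 4 + ‖y‖ / 4 ≤ ‖x - y‖)
    (hF : ∀ n ∈ F, ‖x - latt n‖ ≤ ‖x‖ / 4) :
    ∑ n ∈ F, covSummand x y n ≤ 512 / ((1 + ‖x‖) * (1 + ‖y‖)) := by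
  set M := 16 / ((1 + ‖x‖) ^ 2 * (1 + ‖y‖))
  have hpt : ∀ n ∈ F, covSummand x y n ≤ M * (1 / (1 + ‖x - latt n‖)) := by
    intro n hn
    have hx := hF n hn
    have hy : ‖y‖ / 4 ≤ ‖y - latt n‖ := by
      linarith [norm_sub_le_norm_sub_add_norm_sub x (latt n) y, norm_sub_rev (latt n) y]
    have hn : 3 * ‖x‖ / 4 ≤ ‖latt n‖ := by linarith [norm_sub_norm_le x (latt n)]
    calc covSummand x y n
        ≤ 1 / ((1 + ‖x - latt n‖) * ((1 + ‖y‖) / 4) * ((1 + ‖x‖) / 2) ^ 2) := by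
          unfold covSummand; gcongr <;> linarith [norm_nonneg x]
      _ = M * (1 / (1 + ‖x - latt n‖)) := by simp only [M]; field_simp; norm_num
  calc ∑ n ∈ F, covSummand x y n ≤ ∑ n ∈ F, M * (1 / (1 + ‖x - latt n‖)) := sum_le_sum hpt
    _ = M * ∑ n ∈ F, 1 / (1 + ‖x - latt n‖) := by rw [mul_sum]
    _ ≤ M * (16 * (‖x‖ / 4 + 2)) := by
        gcongr; exact sum_one_div_one_add_norm_sub_latt_le x (by positivity) hF
    _ ≤ M * (32 * (1 + ‖x‖)) := by gcongr M * ?_; linarith [norm_nonneg x]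
    _ = 512 / ((1 + ‖x‖) * (1 + ‖y‖)) := by simp only [M]; field_simp; norm_num

lemma sum_covSummand_far_le (hxy : ‖x‖ ≤ ‖y‖) (hF : ∀ n ∈ F, 2 * ‖y‖ ≤ ‖latt n‖) :
    ∑ n ∈ F, covSummand x y n ≤ 4096 / ((1 + ‖x‖) * (1 + ‖y‖)) := by
  have hpt : ∀ n ∈ F, covSummand x y n ≤ 4 * (1 / (1 + ‖0 - latt n‖) ^ 4) := by
    intro n hn
    have hn := hF n hn
    rw [zero_sub, norm_neg]
    calc covSummand x y n
        ≤ 1 / ((1 + ‖latt n‖) / 2 * ((1 + ‖latt n‖) / 2) * (1 + ‖latt n‖) ^ 2) := by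
          unfold covSummand
          gcongr <;> linarith [norm_sub_norm_le (latt n) x, norm_sub_norm_le (latt n) y,
            norm_sub_rev x (latt n), norm_sub_rev y (latt n)]
      _ = 4 * (1 / (1 + ‖latt n‖) ^ 4) := by field_simp; norm_num
  calc ∑ n ∈ F, covSummand x y n ≤ ∑ n ∈ F, 4 * (1 / (1 + ‖0 - latt n‖) ^ 4) := sum_le_sum hpt
    _ = 4 * ∑ n ∈ F, 1 / (1 + ‖0 - latt n‖) ^ 4 := by rw [mul_sum]
    _ ≤ 4 * (1024 / (1 + 2 * ‖y‖) ^ 2) := by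
        gcongr
        exact sum_one_div_one_add_norm_sub_latt_pow_four_le 0 (by positivity)
          fun n hn ↦ by simpa using hF n hn
    _ = 4096 / (1 + 2 * ‖y‖) ^ 2 := by ring
    _ ≤ 4096 / ((1 + ‖x‖) * (1 + ‖y‖)) := by
        gcongr
        nlinarith [norm_nonneg x, norm_nonneg y, mul_le_mul_of_nonneg_right hxy (norm_nonneg y)]

lemma sum_covSummand_rest_le {R : ℝ} (hR : 0 ≤ R)
    (hF : ∀ n ∈ F, ‖x‖ / 4 ≤ ‖x - latt n‖ ∧ ‖y‖ / 4 ≤ ‖y - latt n‖ ∧ ‖latt n‖ ≤ R) :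
    ∑ n ∈ F, covSummand x y n ≤ 1024 * log (exp 1 + R) / ((1 + ‖x‖) * (1 + ‖y‖)) := by
  set M := 16 / ((1 + ‖x‖) * (1 + ‖y‖))
  have hpt : ∀ n ∈ F, covSummand x y n ≤ M * (1 / (1 + ‖0 - latt n‖) ^ 2) := by
    intro n hn
    obtain ⟨hx, hy, -⟩ := hF n hn
    rw [zero_sub, norm_neg]
    calc covSummand x y n
        ≤ 1 / ((1 + ‖x‖) / 4 * ((1 + ‖y‖) / 4) * (1 + ‖latt n‖) ^ 2) := by
          unfold covSummand; gcongr <;> linarith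
      _ = M * (1 / (1 + ‖latt n‖) ^ 2) := by simp only [M]; field_simp; norm_num
  calc ∑ n ∈ F, covSummand x y n ≤ ∑ n ∈ F, M * (1 / (1 + ‖0 - latt n‖) ^ 2) := sum_le_sum hpt
    _ = M * ∑ n ∈ F, 1 / (1 + ‖0 - latt n‖) ^ 2 := by rw [mul_sum]
    _ ≤ M * (64 * log (exp 1 + R)) := by
        gcongr
        exact sum_one_div_one_add_norm_sub_latt_sq_le 0 hR
          fun n hn ↦ by simpa using (hF n hn).2.2
    _ = 1024 * log (exp 1 + R) / ((1 + ‖x‖) * (1 + ‖y‖)) := by simp only [M]; field_simp; ring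

lemma sum_covSummand_le (hxy : ‖x‖ ≤ ‖y‖) (hy : ‖y‖ / 2 ≤ ‖x - y‖) (s : Finset (ℤ × ℤ)) :
    ∑ n ∈ s, covSummand x y n ≤ 7168 * log (exp 1 + ‖x - y‖) / ((1 + ‖x‖) * (1 + ‖y‖)) := by
  set notNearX := {n ∈ s | ¬‖x - latt n‖ ≤ ‖x‖ / 4}
  set rest := {n ∈ notNearX | ¬‖y - latt n‖ ≤ ‖y‖ / 4}
  have hsplit : ∑ n ∈ s, covSummand x y n
      = ∑ n ∈ s with ‖x - latt n‖ ≤ ‖x‖ / 4, covSummand x y n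
        + ∑ n ∈ notNearX with ‖y - latt n‖ ≤ ‖y‖ / 4, covSummand x y n
        + ∑ n ∈ rest with 2 * ‖y‖ ≤ ‖latt n‖, covSummand x y n
        + ∑ n ∈ rest with ¬2 * ‖y‖ ≤ ‖latt n‖, covSummand x y n := by
    rw [← sum_filter_add_sum_filter_not s (fun n ↦ ‖x - latt n‖ ≤ ‖x‖ / 4),
      ← sum_filter_add_sum_filter_not notNearX (fun n ↦ ‖y - latt n‖ ≤ ‖y‖ / 4),
      ← sum_filter_add_sum_filter_not rest (fun n ↦ 2 * ‖y‖ ≤ ‖latt n‖)]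
    ring
  have hnear_x := sum_covSummand_near_le (x := x) (y := y)
    (F := {n ∈ s | ‖x - latt n‖ ≤ ‖x‖ / 4}) (by linarith) fun n hn ↦ (mem_filter.1 hn).2
  have hnear_y := sum_covSummand_near_le (x := y) (y := x)
    (F := {n ∈ notNearX | ‖y - latt n‖ ≤ ‖y‖ / 4}) (by rw [norm_sub_rev]; linarith)
    fun n hn ↦ (mem_filter.1 hn).2
  simp only [covSummand_comm y x, mul_comm (1 + ‖y‖)] at hnear_y
  have hfar := sum_covSummand_far_le (F := {n ∈ rest | 2 * ‖y‖ ≤ ‖latt n‖}) hxy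
    fun n hn ↦ (mem_filter.1 hn).2
  have hrest := sum_covSummand_rest_le (x := x) (y := y) (R := 2 * ‖y‖)
    (F := {n ∈ rest | ¬2 * ‖y‖ ≤ ‖latt n‖}) (by positivity) fun n hn ↦ by
      simp only [rest, notNearX, mem_filter, not_le] at hn
      exact ⟨hn.1.1.2.le, hn.1.2.le, hn.2.le⟩
  have hlog := log_exp_one_add_le_two_mul_log (by positivity)
    (show 2 * ‖y‖ ≤ 4 * ‖x - y‖ by linarith)
  have hsum : 512 / ((1 + ‖x‖) * (1 + ‖y‖)) + 512 / ((1 + ‖x‖) * (1 + ‖y‖))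
      + 4096 / ((1 + ‖x‖) * (1 + ‖y‖)) + 1024 * log (exp 1 + 2 * ‖y‖) / ((1 + ‖x‖) * (1 + ‖y‖))
      ≤ 7168 * log (exp 1 + ‖x - y‖) / ((1 + ‖x‖) * (1 + ‖y‖)) := by
    rw [← add_div, ← add_div, ← add_div]
    gcongr
    linarith [one_le_log_exp_one_add (norm_nonneg (x - y))]
  linarith

end Regions

theorem covariance_full_sum_estimate :
    ∃ C : ℝ, ∀ x y : E2, ‖x‖ ≤ ‖y‖ → ‖y‖ / 2 ≤ ‖x - y‖ →
      (∑' n : ℤ × ℤ,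
          1 / ((1 + ‖x - latt n‖) * (1 + ‖y - latt n‖) * (1 + ‖latt n‖) ^ 2)) ≤
        C * Real.log (Real.exp 1 + ‖x - y‖) / ((1 + ‖x‖) * (1 + ‖y‖)) := by
  refine ⟨7168, fun x y hxy hy ↦ tsum_le_of_sum_le' ?_ (sum_covSummand_le hxy hy)⟩
  have hL := one_le_log_exp_one_add (norm_nonneg (x - y))
  exact div_nonneg (by linarith) (by positivity)
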